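/- Let ε ∈ (0, 1/2), let s ≥ 1 be an integer with s < 1/(8ε(1+2ε)), let n ≥ 1 be an integer, and let k be a real number with n/(4s) ≤ k ≤ n. Consider the knapsack instance with budget B = n consisting of n small items, each of weight 1 and price 1, and one heavy item of weight n − k and price n − k + 2εn. Suppose S is a feasible solution (a set of items of total weight at most n) whose total price is at least (1−ε)(1+2ε)n, and let m denote the number of small items contained in S. Then k − n/(8s) ≤ m ≤ k. -/

import Mathlib

/-!
Let `m` be the number of small items in `S`. Without the heavy item the value of `S` is
`m ≤ n < (1 - ε)(1 + 2ε)n`, so `S` contains it. Then feasibility reads `n - k + m ≤ n`, i.e.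
`m ≤ k`, and the value bound reads `m ≥ k - ε(1 + 2ε)n`, where `ε(1 + 2ε)n ≤ n/(8s)` by the
choice of `s`.
-/

open Finset

namespace Finset

variable {α : Type*}

theorem filter_isSome_eq_erase_none [DecidableEq α] (S : Finset (Option α)) :
    S.filter (fun o => o.isSome) = S.erase none := by
  ext o
  cases o <;> simp

theorem card_erase_none_le [Fintype α] [DecidableEq α] (S : Finset (Option α)) :
    #(S.erase none) ≤ Fintype.card α := by
  calc #(S.erase none)
      ≤ #((univ : Finset (Option α)).erase none) :=
        card_le_card (erase_subset_erase _ (subset_univ S))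
    _ = Fintype.card α := by
        rw [card_erase_of_mem (mem_univ _), card_univ, Fintype.card_option, Nat.add_sub_cancel]

theorem sum_erase_none_elim_one {R : Type*} [AddCommMonoidWithOne R] [DecidableEq α]
    (S : Finset (Option α)) (c : R) :
    ∑ o ∈ S.erase none, o.elim c (fun _ => 1) = #(S.erase none) := by
  rw [card_eq_sum_ones, Nat.cast_sum, Nat.cast_one]
  refine sum_congr rfl fun o ho => ?_
  obtain ⟨a, rfl⟩ := Option.ne_none_iff_exists'.mp (ne_of_mem_erase ho)
  rfl

theorem sum_elim_one {R : Type*} [AddCommMonoidWithOne R] [DecidableEq α]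
    (S : Finset (Option α)) (c : R) :
    ∑ o ∈ S, o.elim c (fun _ => 1) = (if none ∈ S then c else 0) + #(S.erase none) := by
  rw [← sum_erase_none_elim_one S c]
  split_ifs with h
  · exact (add_sum_erase S _ h).symm
  · rw [erase_eq_of_notMem h, zero_add]

end Finset

theorem one_lt_one_sub_mul_one_add_two_mul {ε : ℝ} (hε0 : 0 < ε) (hε1 : ε < 1 / 2) :
    1 < (1 - ε) * (1 + 2 * ε) := by
  nlinarith

theorem approx_knapsack_solution_small_count_general
    (ε : ℝ) (hε0 : 0 < ε) (hε1 : ε < 1 / 2)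
    (s : ℕ) (hs : 1 ≤ s) (hsε : (s : ℝ) < 1 / (8 * ε * (1 + 2 * ε)))
    (n : ℕ) (hn : 1 ≤ n)
    (k : ℝ)
    (S : Finset (Option (Fin n)))
    (hfeas : ∑ o ∈ S, (Option.elim o ((n : ℝ) - k) (fun _ => 1)) ≤ (n : ℝ))
    (hval : (1 - ε) * (1 + 2 * ε) * (n : ℝ) ≤
      ∑ o ∈ S, (Option.elim o ((n : ℝ) - k + 2 * ε * n) (fun _ => 1))) :
    k - (n : ℝ) / (8 * s) ≤ ((S.filter (fun o => o.isSome)).card : ℝ) ∧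
    ((S.filter (fun o => o.isSome)).card : ℝ) ≤ k := by
  rw [filter_isSome_eq_erase_none]
  rw [sum_elim_one] at hfeas hval
  have hgap : ε * (1 + 2 * ε) * n ≤ n / (8 * s) := by
    have hs0 : (0 : ℝ) < s := by exact_mod_cast hs
    rw [lt_one_div hs0 (by positivity), lt_div_iff₀ (by positivity)] at hsε
    rw [le_div_iff₀ (by positivity)]
    nlinarith
  by_cases hheavy : none ∈ S
  · simp only [if_pos hheavy] at hfeas hval
    constructor <;> linarith
  · simp only [if_neg hheavy, zero_add] at hval
    have hm : (#(S.erase none) : ℝ) ≤ n := by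
      exact_mod_cast (card_erase_none_le S).trans_eq (Fintype.card_fin n)
    have hn0 : (0 : ℝ) < n := by exact_mod_cast hn
    linarith [lt_mul_of_one_lt_left hn0 (one_lt_one_sub_mul_one_add_two_mul hε0 hε1)]

/-- Items: `some i` is the `i`-th small item (weight 1, price 1);
`none` is the heavy item (weight `n - k`, price `n - k + 2εn`). -/
theorem approx_knapsack_solution_small_count
    (ε : ℝ) (hε0 : 0 < ε) (hε1 : ε < 1 / 2)
    (s : ℕ) (hs : 1 ≤ s) (hsε : (s : ℝ) < 1 / (8 * ε * (1 + 2 * ε)))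
    (n : ℕ) (hn : 1 ≤ n)
    (k : ℝ) (hk1 : (n : ℝ) / (4 * s) ≤ k) (hk2 : k ≤ n)
    (S : Finset (Option (Fin n)))
    (hfeas : ∑ o ∈ S, (Option.elim o ((n : ℝ) - k) (fun _ => 1)) ≤ (n : ℝ))
    (hval : (1 - ε) * (1 + 2 * ε) * (n : ℝ) ≤
      ∑ o ∈ S, (Option.elim o ((n : ℝ) - k + 2 * ε * n) (fun _ => 1))) :
    k - (n : ℝ) / (8 * s) ≤ ((S.filter (fun o => o.isSome)).card : ℝ) ∧
    ((S.filter (fun o => o.isSome)).card : ℝ) ≤ k :=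
  approx_knapsack_solution_small_count_general ε hε0 hε1 s hs hsε n hn k S hfeas hval
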